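/- Let f be a càdlàg function without negative jumps that is 'good' on [0,T]: in particular, f attains no local minimum at any right endpoint r of an excursion interval. Then f is continuous at every right endpoint r of every excursion interval of f. -/

import Mathlib

open Set Function

/-- `f` has left limits at every point. -/
def HasLeftLimits (f : ℝ → ℝ) : Prop :=
  ∀ x : ℝ, ∃ l : ℝ, Filter.Tendsto f (nhdsWithin x (Iio x)) (nhds l)

/-- `f` is right-continuous. -/
def RightCont (f : ℝ → ℝ) : Prop :=
  ∀ x : ℝ, ContinuousWithinAt f (Ici x) x

/-- `f` has no negative jumps. -/
def NoNegJumps (f : ℝ → ℝ) : Prop :=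
  ∀ x : ℝ, Function.leftLim f x ≤ f x

/-- `(l, r)` is an excursion interval of `f`:
`f(l-) = f(r-) = inf_{t ≤ r} f(t)` and `f(t) > inf_{s ≤ l} f(s)` on `(l, r)`. -/
def IsExcursionInterval (f : ℝ → ℝ) (l r : ℝ) : Prop :=
  0 ≤ l ∧ l < r ∧
  Function.leftLim f l = sInf (f '' Icc 0 r) ∧
  Function.leftLim f r = sInf (f '' Icc 0 r) ∧
  ∀ t ∈ Ioo l r, sInf (f '' Icc 0 l) < f t

/-- The right endpoints of excursion intervals of `f` contained in `[0, T]`. -/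
def ExcEnds (f : ℝ → ℝ) (T : ℝ) : Set ℝ :=
  {r | ∃ l, IsExcursionInterval f l r ∧ r ≤ T}

/-- `f` is good on `[0, T]`: the excursion right-endpoints have no isolated points,
the complement of the union of excursion intervals in `[0, sup of endpoints]` is
Lebesgue-null, and `f` attains no local minimum at any excursion right-endpoint. -/
def GoodOn (f : ℝ → ℝ) (T : ℝ) : Prop :=
  (∀ r ∈ ExcEnds f T, r ∈ closure (ExcEnds f T \ {r})) ∧
  MeasureTheory.volume
      (Icc (0 : ℝ) (sSup (ExcEnds f T)) \
        ⋃ p ∈ {p : ℝ × ℝ | IsExcursionInterval f p.1 p.2 ∧ p.2 ≤ T}, Ioo p.1 p.2) = 0 ∧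
  ∀ r ∈ ExcEnds f T, ¬ IsLocalMin f r

/-!
Since `f(r-) = inf_{[0,r]} f ≤ f(r)`, discontinuity at an excursion end `r` means an upward jump.
By right-continuity, every `x ∈ (l, r]` then has `f` strictly above the running infimum at `l`
(or at `r`, for `x = r`) on a right neighbourhood of `x`; since every excursion end `y` has
`f(y-) = inf_{[0,y]} f`, no excursion end lies immediately to the right of any point of `(l, r]`.
But a set without isolated points that has such right gaps at every point of `(l, r]` cannot
contain `r`: the infimum of its points in `[q, r]`, for some `q` outside it, could be approached
neither from the right nor from the left.
-/

open Set Filter Topology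

lemma frequently_nhdsLT_of_eventually_nhdsGT_notMem {α : Type*} [LinearOrder α]
    [TopologicalSpace α] {S : Set α} {x : α} (hx : x ∈ closure (S \ {x}))
    (hgap : ∀ᶠ y in 𝓝[>] x, y ∉ S) : ∃ᶠ y in 𝓝[<] x, y ∈ S := by
  rw [mem_closure_ne_iff_frequently_within, ← nhdsLT_sup_nhdsGT, frequently_sup] at hx
  exact hx.resolve_right fun h => (h.and_eventually hgap).exists.elim fun _ h => h.2 h.1

section RightGaps

variable {α : Type*} [ConditionallyCompleteLinearOrder α] [TopologicalSpace α] [OrderTopology α]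
  [DenselyOrdered α] [NoMaxOrder α]

lemma notMem_of_eventually_nhdsGT_notMem {S : Set α} (hS : ∀ s ∈ S, s ∈ closure (S \ {s}))
    {a b : α} (hab : a < b) (hgap : ∀ x ∈ Ioc a b, ∀ᶠ y in 𝓝[>] x, y ∉ S) : b ∉ S := by
  intro hb
  obtain ⟨q, ⟨haq, hqb⟩, hqS⟩ : ∃ q ∈ Ioo a b, q ∉ S := by
    obtain ⟨p, hp⟩ := nonempty_Ioo.2 hab
    obtain ⟨q, hq, hqS⟩ :=
      (Eventually.and (Ioo_mem_nhdsGT hp.2) (hgap p (Ioo_subset_Ioc_self hp))).exists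
    exact ⟨q, ⟨hp.1.trans hq.1, hq.2⟩, hqS⟩
  set A := S ∩ Icc q b
  have hA : b ∈ A := ⟨hb, hqb.le, le_rfl⟩
  have hAbdd : BddBelow A := ⟨q, fun z hz => hz.2.1⟩
  have hqx : q ≤ sInf A := le_csInf ⟨b, hA⟩ fun z hz => hz.2.1
  have hxb : sInf A ≤ b := csInf_le hAbdd hA
  have hgapx := hgap (sInf A) ⟨haq.trans_le hqx, hxb⟩
  by_cases hxS : sInf A ∈ S
  · have hqx' : q < sInf A := hqx.lt_of_ne fun h => hqS (h ▸ hxS)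
    obtain ⟨y, hyS, hqy, hyx⟩ := ((frequently_nhdsLT_of_eventually_nhdsGT_notMem
      (hS _ hxS) hgapx).and_eventually (Ioo_mem_nhdsLT hqx')).exists
    exact hyx.not_ge (csInf_le hAbdd ⟨hyS, hqy.le, hyx.le.trans hxb⟩)
  · obtain ⟨u, hxu, hu⟩ := mem_nhdsGT_iff_exists_Ioo_subset.1 hgapx
    obtain ⟨z, hzA, hzu⟩ := exists_lt_of_csInf_lt ⟨b, hA⟩ hxu
    have hxz : sInf A < z := (csInf_le hAbdd hzA).lt_of_ne fun h => hxS (h ▸ hzA.1)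
    exact hu ⟨hxz, hzu⟩ hzA.1

end RightGaps

section Cadlag

variable {f : ℝ → ℝ}

lemma HasLeftLimits.tendsto_leftLim (hll : HasLeftLimits f) (x : ℝ) :
    Tendsto f (𝓝[<] x) (𝓝 (leftLim f x)) := by
  obtain ⟨L, hL⟩ := hll x
  rwa [leftLim_eq_of_tendsto hL]

lemma RightCont.exists_eventually_le_nhds (hrc : RightCont f) (hll : HasLeftLimits f)
    (x : ℝ) : ∃ M, ∀ᶠ y in 𝓝 x, M ≤ f y := by
  have hleft :=
    (hll.tendsto_leftLim x).eventually (eventually_ge_nhds (sub_one_lt (leftLim f x)))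
  have hright := (hrc x).eventually (eventually_ge_nhds (sub_one_lt (f x)))
  refine ⟨min (leftLim f x - 1) (f x - 1), ?_⟩
  rw [← nhdsLT_sup_nhdsGE, eventually_sup]
  exact ⟨hleft.mono fun _ => min_le_of_left_le, hright.mono fun _ => min_le_of_right_le⟩

lemma RightCont.bddBelow_image_of_isCompact (hrc : RightCont f) (hll : HasLeftLimits f)
    {s : Set ℝ} (hs : IsCompact s) : BddBelow (f '' s) := by
  refine hs.induction_on (p := fun t => BddBelow (f '' t)) (by simp)
    (fun t u htu hu => hu.mono (image_mono htu))
    (fun t u ht hu => by simpa only [image_union] using ht.union hu) fun x _ => ?_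
  obtain ⟨M, hM⟩ := hrc.exists_eventually_le_nhds hll x
  exact ⟨{y | M ≤ f y}, mem_nhdsWithin_of_mem_nhds hM, M, by rintro _ ⟨y, hy, rfl⟩; exact hy⟩

lemma RightCont.eventually_nhdsGT_lt_leftLim (hrc : RightCont f) (hll : HasLeftLimits f)
    {x v : ℝ} (hv : v < f x) : ∀ᶠ y in 𝓝[>] x, v < leftLim f y := by
  obtain ⟨c, hvc, hcf⟩ := exists_between hv
  have hc : ∀ᶠ z in 𝓝[>] x, c < f z :=
    ((hrc x).mono Ioi_subset_Ici_self).eventually (eventually_gt_nhds hcf)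
  obtain ⟨u, hxu, hu⟩ := mem_nhdsGT_iff_exists_Ioo_subset.1 hc
  filter_upwards [Ioo_mem_nhdsGT hxu] with y hy
  refine hvc.trans_le (ge_of_tendsto (hll.tendsto_leftLim y) ?_)
  filter_upwards [Ioo_mem_nhdsLT hy.1] with z hz
  exact (hu ⟨hz.1, hz.2.trans hy.2⟩).le

lemma RightCont.continuousAt_of_leftLim_eq (hrc : RightCont f) (hll : HasLeftLimits f) {x : ℝ}
    (hx : leftLim f x = f x) : ContinuousAt f x := by
  rw [ContinuousAt, ← nhdsLT_sup_nhdsGE, tendsto_sup]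
  exact ⟨hx ▸ hll.tendsto_leftLim x, hrc x⟩

end Cadlag

section Excursion

variable {f : ℝ → ℝ} (hrc : RightCont f) (hll : HasLeftLimits f)
include hrc hll

lemma sInf_image_Icc_zero_anti {a b : ℝ} (ha : 0 ≤ a) (hab : a ≤ b) :
    sInf (f '' Icc 0 b) ≤ sInf (f '' Icc 0 a) :=
  csInf_le_csInf (hrc.bddBelow_image_of_isCompact hll isCompact_Icc)
    ((nonempty_Icc.2 ha).image f) (image_mono (Icc_subset_Icc_right hab))

lemma eventually_nhdsGT_notMem_excEnds (T : ℝ) {w x : ℝ} (hw : 0 ≤ w) (hwx : w ≤ x)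
    (hx : sInf (f '' Icc 0 w) < f x) : ∀ᶠ y in 𝓝[>] x, y ∉ ExcEnds f T := by
  filter_upwards [hrc.eventually_nhdsGT_lt_leftLim hll hx, self_mem_nhdsWithin]
    with y hy hxy hyE
  obtain ⟨_, hexc, -⟩ := hyE
  rw [hexc.2.2.2.1] at hy
  exact hy.not_ge (sInf_image_Icc_zero_anti hrc hll hw (hwx.trans (le_of_lt hxy)))

end Excursion

theorem good_continuousAt_excursion_end_general (f : ℝ → ℝ) (T : ℝ)
    (hrc : RightCont f) (hll : HasLeftLimits f)
    (hgood : GoodOn f T) :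
    ∀ r ∈ ExcEnds f T, ContinuousAt f r := by
  intro r hr
  obtain ⟨l, ⟨hl, hlr, -, hleft, habove⟩, -⟩ := id hr
  have hfr : sInf (f '' Icc 0 r) ≤ f r :=
    csInf_le (hrc.bddBelow_image_of_isCompact hll isCompact_Icc)
      (mem_image_of_mem f ⟨hl.trans hlr.le, le_rfl⟩)
  refine hrc.continuousAt_of_leftLim_eq hll <| hleft.trans <| hfr.antisymm <| not_lt.1 fun hjump => ?_
  refine notMem_of_eventually_nhdsGT_notMem hgood.1 hlr (fun x hx => ?_) hr
  rcases hx.2.lt_or_eq with hxr | rfl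
  · exact eventually_nhdsGT_notMem_excEnds hrc hll T hl hx.1.le (habove x ⟨hx.1, hxr⟩)
  · exact eventually_nhdsGT_notMem_excEnds hrc hll T (hl.trans hlr.le) le_rfl hjump

/-- A good càdlàg function without negative jumps is continuous at every right
endpoint of every excursion interval. -/
theorem good_continuousAt_excursion_end (f : ℝ → ℝ) (T : ℝ)
    (hrc : RightCont f) (hll : HasLeftLimits f) (hnn : NoNegJumps f)
    (hgood : GoodOn f T) :
    ∀ r ∈ ExcEnds f T, ContinuousAt f r :=
  good_continuousAt_excursion_end_general f T hrc hll hgood
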